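/- Let g be a symplectic automorphism of the complex Hilbert space V (i.e., a real-linear automorphism preserving Ω = Im<·|·>), with complex-linear part C_g and antilinear part A_g. Then C_g* C_g − A_g* A_g = I (adjoints relative to the real inner product Re<·|·>), hence ‖C_g v‖² = ‖A_g v‖² + ‖v‖² for all v ∈ V, and consequently C_g is bounded below by 1, injective, has dense range, and is invertible. -/

import Mathlib

/-!
Expanding, `⟪C_g x, C_g y⟫ - ⟪A_g x, A_g y⟫` is half of `I ⟪g (I x), g y⟫ - I ⟪g x, g (I y)⟫`,
whose real part `Ω(x, I y) - Ω(I x, y) = 2 Re⟪x, y⟫` is fixed by the symplectic condition.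
So `C_g* C_g - A_g* A_g = 1`, and `C_g` is bounded below by `1`: it is injective with closed
range. The symplectic condition also makes `C_{g⁻¹}` the real adjoint of `C_g`, and `C_{g⁻¹}` is
injective for the same reason, so the range of `C_g` has trivial orthogonal complement.
-/

/-- The complex-linear part `C_f = ½(f − JfJ)` of a real-linear map `f`. -/
noncomputable def Cpart {V : Type*} [AddCommGroup V] [Module ℂ V] (f : V → V) : V → V :=
  fun v => (2 : ℂ)⁻¹ • (f v - Complex.I • f (Complex.I • v))

/-- The antilinear part `A_f = ½(f + JfJ)` of a real-linear map `f`. -/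
noncomputable def Apart {V : Type*} [AddCommGroup V] [Module ℂ V] (f : V → V) : V → V :=
  fun v => (2 : ℂ)⁻¹ • (f v + Complex.I • f (Complex.I • v))

open Complex
open scoped InnerProductSpace

theorem AntilipschitzWith.surjective_of_orthogonal_range_eq_bot {𝕜 E F : Type*} [RCLike 𝕜]
    [NormedAddCommGroup E] [InnerProductSpace 𝕜 E] [CompleteSpace E] [NormedAddCommGroup F]
    [InnerProductSpace 𝕜 F] {K : NNReal} {T : E →L[𝕜] F} (hT : AntilipschitzWith K T)
    (h : T.rangeᗮ = ⊥) : Function.Surjective T := by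
  have : CompleteSpace T.range :=
    (hT.isComplete_range T.uniformContinuous).completeSpace_coe
  exact LinearMap.range_eq_top.mp (Submodule.orthogonal_eq_bot_iff.mp h)

section ComplexLinearPart

variable {V : Type*} [NormedAddCommGroup V] [NormedSpace ℂ V] (g : V →L[ℝ] V)

theorem Cpart_add (u w : V) : Cpart g (u + w) = Cpart g u + Cpart g w := by
  simp only [Cpart, smul_add, map_add]
  module

theorem Cpart_real_smul (r : ℝ) (v : V) : Cpart g (r • v) = r • Cpart g v := by
  simp only [Cpart, smul_comm I r, map_smul, ← smul_sub]
  rw [smul_comm]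

theorem Cpart_I_smul (v : V) : Cpart g (I • v) = I • Cpart g v := by
  simp only [Cpart, smul_smul, I_mul_I, neg_one_smul, map_neg, smul_sub, smul_neg]
  rw [mul_left_comm, I_mul_I]
  module

theorem Cpart_smul (c : ℂ) (v : V) : Cpart g (c • v) = c • Cpart g v := by
  have hc : ∀ w : V, c • w = c.re • w + c.im • (I • w) := fun w => by
    conv_lhs => rw [← re_add_im c]
    rw [add_smul, mul_smul, Complex.coe_smul, Complex.coe_smul]
  rw [hc v, Cpart_add, Cpart_real_smul, Cpart_real_smul, Cpart_I_smul, ← hc]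

noncomputable def cpartCLM : V →L[ℂ] V where
  toFun := Cpart g
  map_add' := Cpart_add g
  map_smul' := Cpart_smul g
  cont := by unfold Cpart; fun_prop

@[simp]
theorem cpartCLM_apply (v : V) : cpartCLM g v = Cpart g v := rfl

end ComplexLinearPart

section Symplectic

variable {V : Type*} [NormedAddCommGroup V] [InnerProductSpace ℂ V]

theorem re_inner_self_eq_norm_sq (v : V) : (⟪v, v⟫_ℂ).re = ‖v‖ ^ 2 :=
  inner_self_eq_norm_sq (𝕜 := ℂ) v

theorem inner_Cpart_sub_inner_Apart (f : V → V) (x y : V) :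
    ⟪Cpart f x, Cpart f y⟫_ℂ - ⟪Apart f x, Apart f y⟫_ℂ
      = (I * ⟪f (I • x), f y⟫_ℂ - I * ⟪f x, f (I • y)⟫_ℂ) / 2 := by
  simp only [Cpart, Apart, inner_smul_left, inner_smul_right, inner_sub_left, inner_sub_right,
    inner_add_left, inner_add_right, map_inv₀, conj_I, conj_ofNat]
  ring

theorem re_inner_Cpart_left {f h : V → V}
    (hfh : ∀ x z : V, (⟪f x, z⟫_ℂ).im = (⟪x, h z⟫_ℂ).im) (x y : V) :
    (⟪Cpart f x, y⟫_ℂ).re = (⟪x, Cpart h y⟫_ℂ).re := by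
  have h1 : (⟪f x, y⟫_ℂ).re = (⟪x, h (I • y)⟫_ℂ).im := by
    rw [← hfh, inner_smul_right]; simp [mul_im]
  have h2 : (⟪f (I • x), y⟫_ℂ).im = -(⟪x, h y⟫_ℂ).re := by
    rw [hfh, inner_smul_left]; simp [mul_im]
  simp [Cpart, mul_re, h1, h2, add_comm, mul_comm]

def IsSymplectic (f : V → V) : Prop :=
  ∀ x y : V, (⟪f x, f y⟫_ℂ).im = (⟪x, y⟫_ℂ).im

namespace IsSymplectic

variable {f h : V → V}

theorem of_rightInverse (hf : IsSymplectic f) (hfh : Function.RightInverse h f) :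
    IsSymplectic h := fun x y => by
  rw [← hf, hfh x, hfh y]

theorem im_inner_apply_left (hf : IsSymplectic f) (hfh : Function.RightInverse h f) (x z : V) :
    (⟪f x, z⟫_ℂ).im = (⟪x, h z⟫_ℂ).im := by
  simpa only [hfh z] using hf x (h z)

theorem re_inner_Cpart_sub_re_inner_Apart (hf : IsSymplectic f) (x y : V) :
    (⟪Cpart f x, Cpart f y⟫_ℂ).re - (⟪Apart f x, Apart f y⟫_ℂ).re = (⟪x, y⟫_ℂ).re := by
  have h1 : (⟪f (I • x), f y⟫_ℂ).im = -(⟪x, y⟫_ℂ).re := by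
    rw [hf, inner_smul_left]; simp [mul_im]
  have h2 : (⟪f x, f (I • y)⟫_ℂ).im = (⟪x, y⟫_ℂ).re := by
    rw [hf, inner_smul_right]; simp [mul_im]
  rw [← sub_re, inner_Cpart_sub_inner_Apart]
  simp [mul_re, h1, h2]

theorem norm_Cpart_sq (hf : IsSymplectic f) (v : V) :
    ‖Cpart f v‖ ^ 2 = ‖Apart f v‖ ^ 2 + ‖v‖ ^ 2 := by
  have := hf.re_inner_Cpart_sub_re_inner_Apart v v
  simp only [re_inner_self_eq_norm_sq] at this
  linarith

theorem norm_le_norm_Cpart (hf : IsSymplectic f) (v : V) : ‖v‖ ≤ ‖Cpart f v‖ :=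
  le_of_sq_le_sq (by nlinarith [hf.norm_Cpart_sq v, sq_nonneg ‖Apart f v‖]) (norm_nonneg _)

theorem antilipschitz_cpartCLM {g : V →L[ℝ] V} (hg : IsSymplectic g) :
    AntilipschitzWith 1 (cpartCLM g) :=
  (cpartCLM g).antilipschitz_of_bound fun v => by simpa using hg.norm_le_norm_Cpart v

theorem orthogonal_range_cpartCLM {g : V →L[ℝ] V} (hg : IsSymplectic g)
    (hsurj : Function.Surjective g) : (cpartCLM g).rangeᗮ = ⊥ := by
  obtain ⟨h, hgh⟩ := hsurj.hasRightInverse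
  refine (Submodule.eq_bot_iff _).mpr fun y hy => norm_le_zero_iff.mp ?_
  have hCh : Cpart h y = 0 := by
    have h0 : ⟪cpartCLM g (Cpart h y), y⟫_ℂ = 0 :=
      (Submodule.mem_orthogonal _ y).mp hy _ (LinearMap.mem_range_self _ _)
    replace h0 := congrArg re h0
    rwa [cpartCLM_apply, re_inner_Cpart_left (hg.im_inner_apply_left hgh),
      re_inner_self_eq_norm_sq, zero_re, sq_eq_zero_iff, norm_eq_zero] at h0
  simpa [hCh] using (hg.of_rightInverse hgh).norm_le_norm_Cpart y

end IsSymplectic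

end Symplectic

/-- Let `g` be a symplectic automorphism of the complex Hilbert space `V` (a bounded
real-linear bijection preserving `Ω = Im⟨·|·⟩`), with complex-linear part `C_g` and
antilinear part `A_g`.  Then `C_g* C_g − A_g* A_g = I` relative to the real inner product
`Re⟨·|·⟩` (i.e. `(C_g x|C_g y) − (A_g x|A_g y) = (x|y)` for all `x, y`), hence
`‖C_g v‖² = ‖A_g v‖² + ‖v‖²` for all `v`; consequently `C_g` is bounded below by `1`,
injective, has dense range, and is invertible. -/
theorem stmt17 {V : Type*} [NormedAddCommGroup V] [InnerProductSpace ℂ V] [CompleteSpace V]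
    (g : V →L[ℝ] V) (hbij : Function.Bijective g)
    (hsymp : ∀ x y : V, (inner ℂ (g x) (g y) : ℂ).im = (inner ℂ x y : ℂ).im) :
    (∀ x y : V,
        (inner ℂ (Cpart (g : V → V) x) (Cpart (g : V → V) y) : ℂ).re
          - (inner ℂ (Apart (g : V → V) x) (Apart (g : V → V) y) : ℂ).re
          = (inner ℂ x y : ℂ).re) ∧
    (∀ v : V, ‖Cpart (g : V → V) v‖ ^ 2 = ‖Apart (g : V → V) v‖ ^ 2 + ‖v‖ ^ 2) ∧
    (∀ v : V, ‖v‖ ≤ ‖Cpart (g : V → V) v‖) ∧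
    Function.Injective (Cpart (g : V → V)) ∧
    DenseRange (Cpart (g : V → V)) ∧
    Function.Bijective (Cpart (g : V → V)) := by
  have hg : IsSymplectic (g : V → V) := hsymp
  have hC : AntilipschitzWith 1 (cpartCLM g) := hg.antilipschitz_cpartCLM
  have hinj : Function.Injective (Cpart (g : V → V)) := hC.injective
  have hsurj : Function.Surjective (Cpart (g : V → V)) :=
    hC.surjective_of_orthogonal_range_eq_bot (hg.orthogonal_range_cpartCLM hbij.surjective)
  exact ⟨hg.re_inner_Cpart_sub_re_inner_Apart, hg.norm_Cpart_sq, hg.norm_le_norm_Cpart, hinj,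
    hsurj.denseRange, hinj, hsurj⟩
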